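/- Let N be a bounded normal operator in a Krein space. A point λ is of two-sided positive type for N (λ ∈ σ₊(N) and λ̄ ∈ σ₊(N⁺)) if and only if 0 is a spectral point of positive type of the Krein-selfadjoint operator A(λ) = (N⁺ - λ̄)(N - λ). -/

import Mathlib

/-! Write `M = N - λ`, so that `M⁺ = N⁺ - λ̄`, `A(λ) = M⁺M` and, by normality, `A(λ) = MM⁺` as well.
Then `[A x, x] = [M x, M x] = [M⁺ x, M⁺ x]`. The one analytic input is: if `0` is of positive type
for `B`, every sequence `u` with `B u → 0` and `[u, u] → 0` tends to `0` (otherwise normalise a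
subsequence bounded away from `0`; it is an approximate eigensequence along which `[·,·] → 0`).
For a unit sequence with `A x → 0` this applies to `u = M x` with `B = M⁺` or `B = A`, and to
`u = M⁺ x` with `B = A`, so `x` is an approximate eigensequence of `M` and of `M⁺`; conversely,
approximate eigensequences of `M` or `M⁺` are ones of `A`. -/

open Filter Topology ContinuousLinearMap

noncomputable section

variable {H : Type*} [NormedAddCommGroup H] [InnerProductSpace ℂ H] [CompleteSpace H]

def kadj (J T : H →L[ℂ] H) : H →L[ℂ] H := J ∘L (ContinuousLinearMap.adjoint T) ∘L J

def ApproxEig (T : H →L[ℂ] H) (l : ℂ) (x : ℕ → H) : Prop :=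
  (∀ n, ‖x n‖ = 1) ∧ Tendsto (fun n => T (x n) - l • x n) atTop (nhds 0)

def approxSpec (T : H →L[ℂ] H) : Set ℂ := {l | ∃ x : ℕ → H, ApproxEig T l x}

def posType (J T : H →L[ℂ] H) : Set ℂ :=
  {l | l ∈ approxSpec T ∧ ∀ x : ℕ → H, ApproxEig T l x →
      0 < Filter.liminf (fun n => (inner ℂ (J (x n)) (x n) : ℂ).re) Filter.atTop}

section

omit [CompleteSpace H]

def IsPositiveAt (J T : H →L[ℂ] H) (l : ℂ) : Prop :=
  ∀ x : ℕ → H, ApproxEig T l x → 0 < liminf (fun n => (inner ℂ (J (x n)) (x n)).re) atTop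

theorem mem_posType_iff {J T : H →L[ℂ] H} {l : ℂ} :
    l ∈ posType J T ↔ l ∈ approxSpec T ∧ IsPositiveAt J T l :=
  Iff.rfl

theorem approxEig_zero_iff {T : H →L[ℂ] H} {x : ℕ → H} :
    ApproxEig T 0 x ↔ (∀ n, ‖x n‖ = 1) ∧ Tendsto (fun n => T (x n)) atTop (𝓝 0) := by
  simp only [ApproxEig, zero_smul, sub_zero]

theorem approxEig_sub_smul_one_iff {T : H →L[ℂ] H} {l : ℂ} {x : ℕ → H} :
    ApproxEig (T - l • 1) 0 x ↔ ApproxEig T l x := by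
  simp [ApproxEig]

theorem mem_posType_iff_zero_mem_posType_sub {J T : H →L[ℂ] H} {l : ℂ} :
    l ∈ posType J T ↔ 0 ∈ posType J (T - l • 1) := by
  simp only [mem_posType_iff, IsPositiveAt, approxSpec, Set.mem_ofPred_eq,
    approxEig_sub_smul_one_iff]

theorem ApproxEig.comp_left {T : H →L[ℂ] H} {x : ℕ → H} (hx : ApproxEig T 0 x)
    (S : H →L[ℂ] H) : ApproxEig (S ∘L T) 0 x := by
  rw [approxEig_zero_iff] at hx ⊢
  exact ⟨hx.1, (S.continuous.tendsto' 0 0 (map_zero S)).comp hx.2⟩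

theorem tendsto_re_inner_J_zero (J : H →L[ℂ] H) {v x : ℕ → H} (hv : Tendsto v atTop (𝓝 0))
    (hx : ∀ n, ‖x n‖ = 1) : Tendsto (fun n => (inner ℂ (J (v n)) (x n)).re) atTop (𝓝 0) := by
  refine squeeze_zero_norm (fun n => ?_) (by simpa using (tendsto_norm_zero.comp hv).const_mul ‖J‖)
  calc ‖(inner ℂ (J (v n)) (x n)).re‖ ≤ ‖inner ℂ (J (v n)) (x n)‖ := Complex.abs_re_le_norm _
    _ ≤ ‖J (v n)‖ * ‖x n‖ := norm_inner_le_norm _ _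
    _ ≤ ‖J‖ * ‖v n‖ := by rw [hx n, mul_one]; exact J.le_opNorm _

theorem not_isPositiveAt_zero_of_le_norm {J B : H →L[ℂ] H} {u : ℕ → H} {ε : ℝ} (hε : 0 < ε)
    (hu : ∀ n, ε ≤ ‖u n‖) (hBu : Tendsto (fun n => B (u n)) atTop (𝓝 0))
    (hJu : Tendsto (fun n => (inner ℂ (J (u n)) (u n)).re) atTop (𝓝 0)) :
    ¬ IsPositiveAt J B 0 := by
  intro hB
  have hu0 : ∀ n, u n ≠ 0 := fun n => norm_pos_iff.1 (hε.trans_le (hu n))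
  have hinv : ∀ n, ‖u n‖⁻¹ ≤ ε⁻¹ := fun n => inv_anti₀ hε (hu n)
  set y : ℕ → H := fun n => (‖u n‖ : ℂ)⁻¹ • u n
  have hy : ApproxEig B 0 y := by
    refine approxEig_zero_iff.2 ⟨fun n => norm_smul_inv_norm (hu0 n), ?_⟩
    have hbdd : IsBoundedUnder (· ≤ ·) atTop (fun n => ‖(‖u n‖ : ℂ)⁻¹‖) :=
      isBoundedUnder_of ⟨ε⁻¹, fun n => by simpa using hinv n⟩
    simpa [y] using hbdd.smul_tendsto_zero hBu
  have hJy : Tendsto (fun n => (inner ℂ (J (y n)) (y n)).re) atTop (𝓝 0) := by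
    have hform : ∀ n,
        (inner ℂ (J (y n)) (y n)).re = ‖u n‖⁻¹ ^ 2 * (inner ℂ (J (u n)) (u n)).re := by
      intro n
      simp only [y, map_smul, inner_smul_left, inner_smul_right, map_inv₀, Complex.conj_ofReal]
      rw [← mul_assoc, ← Complex.ofReal_inv, ← Complex.ofReal_mul, Complex.re_ofReal_mul, sq]
    have hbdd : IsBoundedUnder (· ≤ ·) atTop (fun n => ‖‖u n‖⁻¹ ^ 2‖) :=
      isBoundedUnder_of ⟨ε⁻¹ ^ 2, fun n => by
        simpa using pow_le_pow_left₀ (inv_nonneg.2 (norm_nonneg _)) (hinv n) 2⟩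
    simpa only [hform] using isBoundedUnder_le_mul_tendsto_zero hbdd hJu
  simpa [hJy.liminf_eq] using hB y hy

theorem IsPositiveAt.tendsto_zero {J B : H →L[ℂ] H} (hB : IsPositiveAt J B 0) {u : ℕ → H}
    (hBu : Tendsto (fun n => B (u n)) atTop (𝓝 0))
    (hJu : Tendsto (fun n => (inner ℂ (J (u n)) (u n)).re) atTop (𝓝 0)) :
    Tendsto u atTop (𝓝 0) := by
  by_contra hu
  obtain ⟨ε, hε, hfreq⟩ : ∃ ε > 0, ∃ᶠ n in atTop, ε ≤ ‖u n‖ := by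
    simpa only [Metric.tendsto_nhds, not_forall, not_eventually, dist_zero_right, not_lt,
      exists_prop] using hu
  obtain ⟨φ, hφ, hεφ⟩ := extraction_of_frequently_atTop hfreq
  exact not_isPositiveAt_zero_of_le_norm hε hεφ (hBu.comp hφ.tendsto_atTop)
    (hJu.comp hφ.tendsto_atTop) hB

end

section Krein

variable {J : H →L[ℂ] H}

theorem kadj_kadj (hJ : adjoint J = J) (hJ2 : J ∘L J = 1) (T : H →L[ℂ] H) :
    kadj J (kadj J T) = T := by
  simp only [kadj, adjoint_comp, adjoint_adjoint, hJ]
  calc J ∘L ((J ∘L T ∘L J) ∘L J) = (J ∘L J) ∘L T ∘L (J ∘L J) := by simp only [comp_assoc]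
    _ = T := by rw [hJ2]; rfl

theorem kadj_sub_smul_one (hJ2 : J ∘L J = 1) (T : H →L[ℂ] H) (l : ℂ) :
    kadj J (T - l • 1) = kadj J T - (starRingEnd ℂ) l • 1 := by
  simp only [kadj, map_sub, map_smulₛₗ, adjoint_one, sub_comp, comp_sub, smul_comp, comp_smul]
  rw [one_def, id_comp, hJ2]
  rfl

theorem inner_J_kadj_apply (hJ2 : J ∘L J = 1) (T : H →L[ℂ] H) (u y : H) :
    inner ℂ (J (kadj J T u)) y = inner ℂ (J u) (T y) := by
  have hJJ : J (J (adjoint T (J u))) = adjoint T (J u) := congr($hJ2 (adjoint T (J u)))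
  simp only [kadj, comp_apply, hJJ, adjoint_inner_left]

def IsKreinNormal (J T : H →L[ℂ] H) : Prop := T ∘L kadj J T = kadj J T ∘L T

theorem IsKreinNormal.kadj (hJ : adjoint J = J) (hJ2 : J ∘L J = 1) {T : H →L[ℂ] H}
    (hT : IsKreinNormal J T) : IsKreinNormal J (kadj J T) := by
  rw [IsKreinNormal, kadj_kadj hJ hJ2]
  exact hT.symm

theorem IsKreinNormal.sub_smul_one (hJ2 : J ∘L J = 1) {T : H →L[ℂ] H} (hT : IsKreinNormal J T)
    (l : ℂ) : IsKreinNormal J (T - l • 1) := by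
  rw [IsKreinNormal, kadj_sub_smul_one hJ2] at *
  simp only [sub_comp, comp_sub, smul_comp, comp_smul, one_def, id_comp, comp_id, hT]
  module

theorem tendsto_re_inner_J_apply_self (hJ2 : J ∘L J = 1) {P : H →L[ℂ] H} {x : ℕ → H}
    (hx : ApproxEig (kadj J P ∘L P) 0 x) :
    Tendsto (fun n => (inner ℂ (J (P (x n))) (P (x n))).re) atTop (𝓝 0) := by
  obtain ⟨hx1, hAx⟩ := approxEig_zero_iff.1 hx
  simpa only [comp_apply, inner_J_kadj_apply hJ2] using tendsto_re_inner_J_zero J hAx hx1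

theorem approxEig_of_isPositiveAt_kadj (hJ2 : J ∘L J = 1) {P : H →L[ℂ] H}
    (hpos : IsPositiveAt J (kadj J P) 0) {x : ℕ → H} (hx : ApproxEig (kadj J P ∘L P) 0 x) :
    ApproxEig P 0 x :=
  approxEig_zero_iff.2 ⟨hx.1, hpos.tendsto_zero (approxEig_zero_iff.1 hx).2
    (tendsto_re_inner_J_apply_self hJ2 hx)⟩

theorem approxEig_of_isPositiveAt_kadj_comp_self (hJ2 : J ∘L J = 1) {P : H →L[ℂ] H}
    (hP : IsKreinNormal J P) (hpos : IsPositiveAt J (kadj J P ∘L P) 0) {x : ℕ → H}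
    (hx : ApproxEig (kadj J P ∘L P) 0 x) : ApproxEig P 0 x := by
  refine approxEig_zero_iff.2 ⟨hx.1, hpos.tendsto_zero ?_ (tendsto_re_inner_J_apply_self hJ2 hx)⟩
  have hcomm : ∀ v, kadj J P (P (P v)) = P (kadj J P (P v)) := fun v => congr($hP (P v)).symm
  simpa only [comp_apply, hcomm] using (approxEig_zero_iff.1 (hx.comp_left P)).2

theorem zero_mem_posType_and_kadj_iff (hJ : adjoint J = J) (hJ2 : J ∘L J = 1)
    {M : H →L[ℂ] H} (hM : IsKreinNormal J M) :
    (0 ∈ posType J M ∧ 0 ∈ posType J (kadj J M)) ↔ 0 ∈ posType J (kadj J M ∘L M) := by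
  have hMM : kadj J (kadj J M) ∘L kadj J M = kadj J M ∘L M := by rw [kadj_kadj hJ hJ2]; exact hM
  constructor
  · rintro ⟨⟨⟨x, hx⟩, hposM⟩, -, hposK⟩
    exact ⟨⟨x, hx.comp_left _⟩, fun z hz => hposM z (approxEig_of_isPositiveAt_kadj hJ2 hposK hz)⟩
  · rintro ⟨⟨x, hx⟩, hposA⟩
    have hposA' : IsPositiveAt J (kadj J (kadj J M) ∘L kadj J M) 0 := hMM ▸ hposA
    have hx' : ApproxEig (kadj J (kadj J M) ∘L kadj J M) 0 x := hMM ▸ hx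
    refine ⟨⟨⟨x, approxEig_of_isPositiveAt_kadj_comp_self hJ2 hM hposA hx⟩,
      fun z hz => hposA z (hz.comp_left _)⟩, ⟨x, ?_⟩, fun z hz => hposA' z (hz.comp_left _)⟩
    exact approxEig_of_isPositiveAt_kadj_comp_self hJ2 (hM.kadj hJ hJ2) hposA' hx'

end Krein

theorem twoSidedPosType_iff_zero_posType_A (J N : H →L[ℂ] H)
    (hJ : ContinuousLinearMap.adjoint J = J) (hJ2 : J ∘L J = 1)
    (hN : N ∘L kadj J N = kadj J N ∘L N) (l : ℂ) :
    (l ∈ posType J N ∧ (starRingEnd ℂ) l ∈ posType J (kadj J N)) ↔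
      (0 : ℂ) ∈ posType J
        ((kadj J N - (starRingEnd ℂ) l • (1 : H →L[ℂ] H)) ∘L (N - l • (1 : H →L[ℂ] H))) := by
  rw [mem_posType_iff_zero_mem_posType_sub (T := N),
    mem_posType_iff_zero_mem_posType_sub (T := kadj J N), ← kadj_sub_smul_one hJ2]
  exact zero_mem_posType_and_kadj_iff hJ hJ2 (IsKreinNormal.sub_smul_one hJ2 hN l)
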